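/- arXiv:1002.4493 — 6 statements merged into one kernel-verified Lean document; each statement's English description precedes it below -/
import Mathlib

section
/- Under the hypotheses of the previous statement (monad T with opmonoidal structure (τ, τ₀) satisfying equation (eq:tau_1)), the idempotent ⊓ := (TK ⊗ τ₀) ∘ (TK ⊗ m_K) ∘ τ_{K,TK} ∘ u_{TK} on TK satisfies ⊓ ∘ m_K ∘ T(⊓) = ⊓ ∘ m_K : T²K → TK. -/
/-!
For `h : T Y ⟶ K` let `splitLeft h : T Y ⟶ T K` be `T Y ≅ T (K ⊗ Y) ⟶ T K ⊗ T Y ⟶ T K ⊗ K ≅ T K`,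
built from `τ` and `h`. Counitality of `τ` gives `splitLeft h ≫ τ₀ = h`, and naturality of `τ`
gives `T f ≫ splitLeft h = splitLeft (T f ≫ h)`. Since `⊓ = η ≫ splitLeft (m ≫ τ₀)`, the composite
`f ≫ ⊓` depends on `f` only through `T f ≫ m ≫ τ₀`. Condition (eq:tau_1) at `X = K` says that
`e := T ⊓ ≫ m` equals `splitLeft (m ≫ τ₀)`, so `e ≫ τ₀ = m ≫ τ₀`. As `e` commutes with
multiplication, `T e ≫ m ≫ τ₀ = m ≫ e ≫ τ₀ = m ≫ m ≫ τ₀ = T m ≫ m ≫ τ₀`, hence `e ≫ ⊓ = m ≫ ⊓`.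
-/

open CategoryTheory MonoidalCategory

/-- An opmonoidal (comonoidal) structure on an endofunctor of a monoidal category. -/
structure OpmonStr {M : Type*} [Category M] [MonoidalCategory M] (T : M ⥤ M) where
  τ : ∀ X Y : M, T.obj (X ⊗ Y) ⟶ T.obj X ⊗ T.obj Y
  τ0 : T.obj (𝟙_ M) ⟶ 𝟙_ M
  τ_natural : ∀ {X Y X' Y' : M} (f : X ⟶ X') (g : Y ⟶ Y'),
      T.map (f ⊗ₘ g) ≫ τ X' Y' = τ X Y ≫ (T.map f ⊗ₘ T.map g)
  τ_coassoc : ∀ X Y Z : M,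
      τ (X ⊗ Y) Z ≫ (τ X Y ⊗ₘ 𝟙 (T.obj Z)) ≫ (α_ (T.obj X) (T.obj Y) (T.obj Z)).hom =
        T.map (α_ X Y Z).hom ≫ τ X (Y ⊗ Z) ≫ (𝟙 (T.obj X) ⊗ₘ τ Y Z)
  τ_counit_left : ∀ X : M,
      τ (𝟙_ M) X ≫ (τ0 ⊗ₘ 𝟙 (T.obj X)) ≫ (λ_ (T.obj X)).hom = T.map (λ_ X).hom
  τ_counit_right : ∀ X : M,
      τ X (𝟙_ M) ≫ (𝟙 (T.obj X) ⊗ₘ τ0) ≫ (ρ_ (T.obj X)).hom = T.map (ρ_ X).hom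

variable {M : Type*} [Category M] [MonoidalCategory M]

/-- The canonical morphism `⊓ : TK ⟶ TK` associated to a monad with an opmonoidal
structure on its underlying endofunctor. -/
noncomputable def sqcap (T : Monad M) (O : OpmonStr (T : M ⥤ M)) :
    T.obj (𝟙_ M) ⟶ T.obj (𝟙_ M) :=
  T.η.app (T.obj (𝟙_ M)) ≫ T.map (λ_ (T.obj (𝟙_ M))).inv ≫ O.τ (𝟙_ M) (T.obj (𝟙_ M)) ≫
    (𝟙 (T.obj (𝟙_ M)) ⊗ₘ T.μ.app (𝟙_ M)) ≫ (𝟙 (T.obj (𝟙_ M)) ⊗ₘ O.τ0) ≫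
    (ρ_ (T.obj (𝟙_ M))).hom

namespace OpmonStr

variable {F : M ⥤ M} (O : OpmonStr F)

noncomputable def splitLeft {Y : M} (h : F.obj Y ⟶ 𝟙_ M) : F.obj Y ⟶ F.obj (𝟙_ M) :=
  F.map (λ_ Y).inv ≫ O.τ (𝟙_ M) Y ≫ (F.obj (𝟙_ M) ◁ h) ≫ (ρ_ (F.obj (𝟙_ M))).hom

theorem splitLeft_comp_τ0 {Y : M} (h : F.obj Y ⟶ 𝟙_ M) : O.splitLeft h ≫ O.τ0 = h := by
  have hcounit := O.τ_counit_left Y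
  rw [tensorHom_id] at hcounit
  calc O.splitLeft h ≫ O.τ0
      = F.map (λ_ Y).inv ≫ (O.τ (𝟙_ M) Y ≫ (O.τ0 ▷ F.obj Y) ≫ (λ_ (F.obj Y)).hom) ≫ h := by
        simp only [splitLeft, Category.assoc, ← rightUnitor_naturality, ← unitors_equal,
          whisker_exchange_assoc, leftUnitor_naturality]
    _ = h := by rw [hcounit, ← F.map_comp_assoc, Iso.inv_hom_id, F.map_id, Category.id_comp]

theorem map_comp_splitLeft {Y Y' : M} (f : Y' ⟶ Y) (h : F.obj Y ⟶ 𝟙_ M) :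
    F.map f ≫ O.splitLeft h = O.splitLeft (F.map f ≫ h) := by
  have hnat := O.τ_natural (𝟙 (𝟙_ M)) f
  rw [id_tensorHom, F.map_id, id_tensorHom] at hnat
  simp only [splitLeft, ← F.map_comp_assoc, leftUnitor_inv_naturality, F.map_comp,
    Category.assoc, reassoc_of% hnat, MonoidalCategory.whiskerLeft_comp_assoc]

end OpmonStr

theorem CategoryTheory.Monad.map_map_comp_μ_comp_μ {C : Type*} [Category C] (T : Monad C)
    {X Y : C} (f : Y ⟶ T.obj X) :
    T.map (T.map f ≫ T.μ.app X) ≫ T.μ.app X = T.μ.app Y ≫ T.map f ≫ T.μ.app X := by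
  rw [T.map_comp, Category.assoc, T.assoc]
  exact T.μ.naturality_assoc f (T.μ.app X)

section

variable (T : Monad M) (O : OpmonStr (T : M ⥤ M))

theorem sqcap_eq_splitLeft :
    sqcap T O = T.η.app (T.obj (𝟙_ M)) ≫ O.splitLeft (T.μ.app (𝟙_ M) ≫ O.τ0) := by
  simp only [sqcap, OpmonStr.splitLeft, id_tensorHom, MonoidalCategory.whiskerLeft_comp,
    Category.assoc]

theorem comp_sqcap {A : M} (f : A ⟶ T.obj (𝟙_ M)) :
    f ≫ sqcap T O = T.η.app A ≫ O.splitLeft (T.map f ≫ T.μ.app (𝟙_ M) ≫ O.τ0) := by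
  rw [sqcap_eq_splitLeft, ← O.map_comp_splitLeft, ← T.η.naturality_assoc]
  rfl

theorem map_sqcap_comp_μ
    (htau1 : T.map (T.η.app (𝟙_ M ⊗ T.obj (𝟙_ M)) ≫ O.τ (𝟙_ M) (T.obj (𝟙_ M)) ≫
          (𝟙 (T.obj (𝟙_ M)) ⊗ₘ T.μ.app (𝟙_ M)) ≫ (𝟙 (T.obj (𝟙_ M)) ⊗ₘ O.τ0) ≫
            (ρ_ (T.obj (𝟙_ M))).hom) ≫ T.μ.app (𝟙_ M) =
      O.τ (𝟙_ M) (T.obj (𝟙_ M)) ≫ (𝟙 (T.obj (𝟙_ M)) ⊗ₘ T.μ.app (𝟙_ M)) ≫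
        (𝟙 (T.obj (𝟙_ M)) ⊗ₘ O.τ0) ≫ (ρ_ (T.obj (𝟙_ M))).hom) :
    T.map (sqcap T O) ≫ T.μ.app (𝟙_ M) = O.splitLeft (T.μ.app (𝟙_ M) ≫ O.τ0) := by
  have hunit := T.η.naturality (λ_ (T.obj (𝟙_ M))).inv
  simp only [Functor.id_map] at hunit
  rw [sqcap, ← reassoc_of% hunit, T.map_comp, Category.assoc, htau1]
  simp only [OpmonStr.splitLeft, id_tensorHom, MonoidalCategory.whiskerLeft_comp,
    Category.assoc]

end

/-- Lemma: under condition (eq:tau_1), `⊓ ∘ m_K ∘ T⊓ = ⊓ ∘ m_K`. -/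
theorem sqcap_mul (T : Monad M) (O : OpmonStr (T : M ⥤ M))
    (htau1 : ∀ X : M,
      T.map (T.η.app (X ⊗ T.obj (𝟙_ M)) ≫ O.τ X (T.obj (𝟙_ M)) ≫
          (𝟙 (T.obj X) ⊗ₘ T.μ.app (𝟙_ M)) ≫ (𝟙 (T.obj X) ⊗ₘ O.τ0) ≫ (ρ_ (T.obj X)).hom) ≫
        T.μ.app X =
      O.τ X (T.obj (𝟙_ M)) ≫ (𝟙 (T.obj X) ⊗ₘ T.μ.app (𝟙_ M)) ≫
        (𝟙 (T.obj X) ⊗ₘ O.τ0) ≫ (ρ_ (T.obj X)).hom) :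
    T.map (sqcap T O) ≫ T.μ.app (𝟙_ M) ≫ sqcap T O = T.μ.app (𝟙_ M) ≫ sqcap T O := by
  have hmul := map_sqcap_comp_μ T O (htau1 (𝟙_ M))
  rw [reassoc_of% hmul, comp_sqcap, comp_sqcap]
  congr 2
  calc T.map (O.splitLeft _) ≫ T.μ.app (𝟙_ M) ≫ O.τ0
      = T.μ.app (T.obj (𝟙_ M)) ≫ O.splitLeft (T.μ.app (𝟙_ M) ≫ O.τ0) ≫ O.τ0 := by
        rw [← hmul, reassoc_of% T.map_map_comp_μ_comp_μ, Category.assoc]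
    _ = T.map (T.μ.app (𝟙_ M)) ≫ T.μ.app (𝟙_ M) ≫ O.τ0 := by
        rw [O.splitLeft_comp_τ0, ← reassoc_of% T.assoc]
end

section
/- For a weak bimonad T on a monoidal category M, with τ and τ₀ the induced opmonoidal structure on T, and for any T-algebras (A,a) and (B,b), the morphism E_{A,B} := (a ⊗ b) ∘ τ_{A,B} ∘ u_{A⊗B} : A ⊗ B → A ⊗ B equals i_{A,B} ∘ p_{A,B} and is idempotent, where (p, p₀) and (i, i₀) are the monoidal and opmonoidal structures of the forgetful functor U : Mᵀ → M. -/
/-! The structure map `a : TA → A` underlies an algebra morphism `ε_A : (TA, μ_A) → (A, a)`.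
Naturality of `i ∘ p` along `ε_A ⊗ ε_B` moves `a ⊗ b` past `i ∘ p`, where it cancels against
`u_A ⊗ u_B` by the unit law; what remains of `τ ∘ u`, namely `u ≫ T f ≫ action`, collapses to `f`
by naturality of `u` and the unit law again. Idempotency is separability `p ∘ i = 1`. -/

open CategoryTheory MonoidalCategory

/-- A separable Frobenius structure on a functor between monoidal categories. -/
structure SepFrob {N : Type*} {M : Type*} [Category N] [Category M]
    [MonoidalCategory N] [MonoidalCategory M] (F : N ⥤ M) where
  p : ∀ X Y : N, F.obj X ⊗ F.obj Y ⟶ F.obj (X ⊗ Y)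
  p0 : 𝟙_ M ⟶ F.obj (𝟙_ N)
  i : ∀ X Y : N, F.obj (X ⊗ Y) ⟶ F.obj X ⊗ F.obj Y
  i0 : F.obj (𝟙_ N) ⟶ 𝟙_ M
  p_natural : ∀ {X Y X' Y' : N} (f : X ⟶ X') (g : Y ⟶ Y'),
      (F.map f ⊗ₘ F.map g) ≫ p X' Y' = p X Y ≫ F.map (f ⊗ₘ g)
  i_natural : ∀ {X Y X' Y' : N} (f : X ⟶ X') (g : Y ⟶ Y'),
      F.map (f ⊗ₘ g) ≫ i X' Y' = i X Y ≫ (F.map f ⊗ₘ F.map g)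
  p_assoc : ∀ X Y Z : N,
      (p X Y ⊗ₘ 𝟙 (F.obj Z)) ≫ p (X ⊗ Y) Z ≫ F.map (α_ X Y Z).hom =
        (α_ (F.obj X) (F.obj Y) (F.obj Z)).hom ≫ (𝟙 (F.obj X) ⊗ₘ p Y Z) ≫ p X (Y ⊗ Z)
  p_unit_left : ∀ X : N,
      (p0 ⊗ₘ 𝟙 (F.obj X)) ≫ p (𝟙_ N) X ≫ F.map (λ_ X).hom = (λ_ (F.obj X)).hom
  p_unit_right : ∀ X : N,
      (𝟙 (F.obj X) ⊗ₘ p0) ≫ p X (𝟙_ N) ≫ F.map (ρ_ X).hom = (ρ_ (F.obj X)).hom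
  i_coassoc : ∀ X Y Z : N,
      F.map (α_ X Y Z).hom ≫ i X (Y ⊗ Z) ≫ (𝟙 (F.obj X) ⊗ₘ i Y Z) =
        i (X ⊗ Y) Z ≫ (i X Y ⊗ₘ 𝟙 (F.obj Z)) ≫ (α_ (F.obj X) (F.obj Y) (F.obj Z)).hom
  i_unit_left : ∀ X : N,
      i (𝟙_ N) X ≫ (i0 ⊗ₘ 𝟙 (F.obj X)) ≫ (λ_ (F.obj X)).hom = F.map (λ_ X).hom
  i_unit_right : ∀ X : N,
      i X (𝟙_ N) ≫ (𝟙 (F.obj X) ⊗ₘ i0) ≫ (ρ_ (F.obj X)).hom = F.map (ρ_ X).hom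
  frob1 : ∀ X Y Z : N,
      (𝟙 (F.obj X) ⊗ₘ i Y Z) ≫ (α_ (F.obj X) (F.obj Y) (F.obj Z)).inv ≫ (p X Y ⊗ₘ 𝟙 (F.obj Z)) =
        p X (Y ⊗ Z) ≫ F.map (α_ X Y Z).inv ≫ i (X ⊗ Y) Z
  frob2 : ∀ X Y Z : N,
      (i X Y ⊗ₘ 𝟙 (F.obj Z)) ≫ (α_ (F.obj X) (F.obj Y) (F.obj Z)).hom ≫ (𝟙 (F.obj X) ⊗ₘ p Y Z) =
        p (X ⊗ Y) Z ≫ F.map (α_ X Y Z).hom ≫ i X (Y ⊗ Z)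
  sep : ∀ X Y : N, i X Y ≫ p X Y = 𝟙 (F.obj (X ⊗ Y))

lemma CategoryTheory.Monad.η_app_comp_map_comp_a {C : Type*} [Category C] (T : Monad C)
    (X : T.Algebra) {Y : C} (f : Y ⟶ X.A) : T.η.app Y ≫ T.map f ≫ X.a = f := by
  rw [← T.η.naturality_assoc, Functor.id_map, X.unit]
  exact Category.comp_id f

namespace SepFrob

variable {N : Type*} {M : Type*} [Category N] [Category M] [MonoidalCategory N]
  [MonoidalCategory M] {F : N ⥤ M} (S : SepFrob F)

lemma p_comp_i_idem (X Y : N) :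
    (S.p X Y ≫ S.i X Y) ≫ (S.p X Y ≫ S.i X Y) = S.p X Y ≫ S.i X Y := by
  rw [Category.assoc, ← Category.assoc (S.i X Y), S.sep, Category.id_comp]

lemma p_comp_i_naturality {X Y X' Y' : N} (f : X ⟶ X') (g : Y ⟶ Y') :
    S.p X Y ≫ S.i X Y ≫ (F.map f ⊗ₘ F.map g) = (F.map f ⊗ₘ F.map g) ≫ S.p X' Y' ≫ S.i X' Y' := by
  rw [← S.i_natural, ← Category.assoc, ← S.p_natural, Category.assoc]

end SepFrob

variable {M : Type*} [Category M] [MonoidalCategory M]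

/-- For a weak bimonad `T` (a monad with monoidal Eilenberg–Moore category and separable
Frobenius forgetful functor) with induced opmonoidal structure `τ`, and `T`-algebras
`(A,a)`, `(B,b)`, the morphism `E_{A,B} = (a ⊗ b) ∘ τ_{A,B} ∘ u_{A⊗B}` equals
`i_{A,B} ∘ p_{A,B}` and is idempotent. -/
theorem weakBimonad_E (T : Monad M) [MonoidalCategory T.Algebra]
    (S : SepFrob T.forget) (A B : T.Algebra) :
    (T.η.app (A.A ⊗ B.A) ≫
        (T.map (T.η.app A.A ⊗ₘ T.η.app B.A) ≫
          T.map (S.p (T.free.obj A.A) (T.free.obj B.A)) ≫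
          (T.free.obj A.A ⊗ T.free.obj B.A).a ≫
          S.i (T.free.obj A.A) (T.free.obj B.A)) ≫
        (A.a ⊗ₘ B.a)) =
      S.p A B ≫ S.i A B ∧
    (S.p A B ≫ S.i A B) ≫ (S.p A B ≫ S.i A B) = S.p A B ≫ S.i A B := by
  refine ⟨?_, SepFrob.p_comp_i_idem S A B⟩
  let εA : T.free.obj A.A ⟶ A := ⟨A.a, A.assoc.symm⟩
  let εB : T.free.obj B.A ⟶ B := ⟨B.a, B.assoc.symm⟩
  have hτ := T.η_app_comp_map_comp_a (T.free.obj A.A ⊗ T.free.obj B.A)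
    ((T.η.app A.A ⊗ₘ T.η.app B.A) ≫ S.p (T.free.obj A.A) (T.free.obj B.A))
  -- `erw`: `T.forget.obj A` and `A.A`, `T.forget.obj (T.free.obj X)` and `T.obj X` agree only
  -- after unfolding.
  erw [Functor.map_comp, Category.assoc] at hτ
  simp only [Category.assoc]
  erw [Category.assoc, reassoc_of% hτ, Category.assoc, S.p_comp_i_naturality εA εB,
    ← Category.assoc, ← Category.assoc, tensorHom_comp_tensorHom, A.unit, B.unit,
    id_tensorHom_id, Category.id_comp]
  rfl
end

section
/- Every morphism of Frobenius monoids in a monoidal category is an isomorphism. Concretely, if R and R' are Frobenius monoids and γ : R → R' is simultaneously a monoid morphism and a comonoid morphism, then γ is invertible, with inverse (ε ⊗ R) ∘ (R ⊗ μ') ∘ (R ⊗ γ ⊗ R') ∘ (δ ⊗ R') ∘ (η ⊗ R') (up to associativity coherence). -/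
/-!
The pairing `ε ∘ μ` and the copairing `δ ∘ η` make a Frobenius monoid self-dual; the zigzag
identity comes from the Frobenius law together with the unit and counit laws. A monoid and
comonoid morphism `γ` preserves the pairing and the copairing, so its transpose `γ*` is a
two-sided inverse: in `γ ≫ γ*` the map `γ` is absorbed by the pairing of `R'`, leaving the zigzag
of `R`, and in `γ* ≫ γ` it is absorbed by the copairing of `R`, leaving the zigzag of `R'`.
-/

open CategoryTheory MonoidalCategory

/-- A Frobenius monoid in a monoidal category. -/
structure FrobMon (M : Type*) [Category M] [MonoidalCategory M] where
  R : Mon M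
  δ : R.X ⟶ R.X ⊗ R.X
  ε : R.X ⟶ 𝟙_ M
  coassoc : δ ≫ (δ ⊗ₘ 𝟙 R.X) ≫ (α_ R.X R.X R.X).hom = δ ≫ (𝟙 R.X ⊗ₘ δ)
  counit_left : δ ≫ (ε ⊗ₘ 𝟙 R.X) = (λ_ R.X).inv
  counit_right : δ ≫ (𝟙 R.X ⊗ₘ ε) = (ρ_ R.X).inv
  frob_left : (𝟙 R.X ⊗ₘ δ) ≫ (α_ R.X R.X R.X).inv ≫ (R.mon.mul ⊗ₘ 𝟙 R.X) = R.mon.mul ≫ δ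
  frob_right : (δ ⊗ₘ 𝟙 R.X) ≫ (α_ R.X R.X R.X).hom ≫ (𝟙 R.X ⊗ₘ R.mon.mul) = R.mon.mul ≫ δ

variable {M : Type*} [Category M] [MonoidalCategory M]

namespace FrobMon

def pairing (S : FrobMon M) : S.R.X ⊗ S.R.X ⟶ 𝟙_ M := S.R.mon.mul ≫ S.ε

def copairing (S : FrobMon M) : 𝟙_ M ⟶ S.R.X ⊗ S.R.X := S.R.mon.one ≫ S.δ

theorem zigzag (S : FrobMon M) :
    (λ_ S.R.X).inv ≫ S.copairing ▷ S.R.X ≫ (α_ S.R.X S.R.X S.R.X).hom ≫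
      S.R.X ◁ S.pairing ≫ (ρ_ S.R.X).hom = 𝟙 S.R.X := by
  have frob := S.frob_right
  have counit := S.counit_right
  simp only [tensorHom_id, id_tensorHom] at frob counit
  calc _ = (λ_ S.R.X).inv ≫ S.R.mon.one ▷ S.R.X ≫
          (S.δ ▷ S.R.X ≫ (α_ S.R.X S.R.X S.R.X).hom ≫ S.R.X ◁ S.R.mon.mul) ≫
          S.R.X ◁ S.ε ≫ (ρ_ S.R.X).hom := by
        simp [pairing, copairing]
    _ = 𝟙 S.R.X := by
        rw [frob]
        simp [reassoc_of% counit]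

/-- The transpose of `f` with respect to the self-dualities of `S` and `S'` given by `pairing` and
`copairing`. -/
def dualHom (S S' : FrobMon M) (f : S.R.X ⟶ S'.R.X) : S'.R.X ⟶ S.R.X :=
  (λ_ S'.R.X).inv ≫ S.copairing ▷ S'.R.X ≫ (α_ S.R.X S.R.X S'.R.X).hom ≫
    S.R.X ◁ f ▷ S'.R.X ≫ S.R.X ◁ S'.pairing ≫ (ρ_ S.R.X).hom

theorem comp_dualHom (S S' : FrobMon M) (f g : S.R.X ⟶ S'.R.X) :
    g ≫ dualHom S S' f = (λ_ S.R.X).inv ≫ S.copairing ▷ S.R.X ≫ (α_ S.R.X S.R.X S.R.X).hom ≫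
      S.R.X ◁ ((f ⊗ₘ g) ≫ S'.pairing) ≫ (ρ_ S.R.X).hom := by
  rw [dualHom, leftUnitor_inv_naturality_assoc, whisker_exchange_assoc,
    associator_naturality_right_assoc, ← MonoidalCategory.whiskerLeft_comp_assoc,
    ← tensorHom_def', MonoidalCategory.whiskerLeft_comp_assoc]

theorem dualHom_comp (S S' : FrobMon M) (f g : S.R.X ⟶ S'.R.X) :
    dualHom S S' f ≫ g = (λ_ S'.R.X).inv ≫ (S.copairing ≫ (g ⊗ₘ f)) ▷ S'.R.X ≫
      (α_ S'.R.X S'.R.X S'.R.X).hom ≫ S'.R.X ◁ S'.pairing ≫ (ρ_ S'.R.X).hom := by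
  simp only [dualHom, Category.assoc]
  rw [← rightUnitor_naturality, whisker_exchange_assoc, whisker_exchange_assoc,
    ← associator_naturality_left_assoc, ← associator_naturality_middle_assoc,
    ← comp_whiskerRight_assoc, ← comp_whiskerRight_assoc, Category.assoc,
    ← MonoidalCategory.tensorHom_def]

section Hom

variable {S S' : FrobMon M} {γ : S.R.X ⟶ S'.R.X}

theorem tensorHom_comp_pairing (hmul : (γ ⊗ₘ γ) ≫ S'.R.mon.mul = S.R.mon.mul ≫ γ)
    (hcounit : γ ≫ S'.ε = S.ε) : (γ ⊗ₘ γ) ≫ S'.pairing = S.pairing := by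
  rw [pairing, reassoc_of% hmul, hcounit, pairing]

theorem copairing_comp_tensorHom (hone : S.R.mon.one ≫ γ = S'.R.mon.one)
    (hcomul : γ ≫ S'.δ = S.δ ≫ (γ ⊗ₘ γ)) : S.copairing ≫ (γ ⊗ₘ γ) = S'.copairing := by
  rw [copairing, Category.assoc, ← hcomul, reassoc_of% hone, copairing]

theorem hom_dualHom_id (hmul : (γ ⊗ₘ γ) ≫ S'.R.mon.mul = S.R.mon.mul ≫ γ)
    (hcounit : γ ≫ S'.ε = S.ε) : γ ≫ dualHom S S' γ = 𝟙 S.R.X := by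
  rw [comp_dualHom, tensorHom_comp_pairing hmul hcounit, zigzag]

theorem dualHom_hom_id (hone : S.R.mon.one ≫ γ = S'.R.mon.one)
    (hcomul : γ ≫ S'.δ = S.δ ≫ (γ ⊗ₘ γ)) : dualHom S S' γ ≫ γ = 𝟙 S'.R.X := by
  rw [dualHom_comp, copairing_comp_tensorHom hone hcomul, zigzag]

end Hom

end FrobMon

/-- Every morphism of Frobenius monoids (a map which is simultaneously a monoid and a
comonoid morphism) is an isomorphism, with the explicit two-sided inverse
`(R ⊗ ε') ∘ (R ⊗ μ') ∘ (R ⊗ γ ⊗ R') ∘ (δ ⊗ R') ∘ (η ⊗ R')` (with coherence inserted). -/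
theorem frobMon_hom_isIso (S S' : FrobMon M) (γ : S.R.X ⟶ S'.R.X)
    (hmul : (γ ⊗ₘ γ) ≫ S'.R.mon.mul = S.R.mon.mul ≫ γ)
    (hone : S.R.mon.one ≫ γ = S'.R.mon.one)
    (hcomul : γ ≫ S'.δ = S.δ ≫ (γ ⊗ₘ γ))
    (hcounit : γ ≫ S'.ε = S.ε) :
    IsIso γ ∧
    (γ ≫
        ((λ_ S'.R.X).inv ≫ (S.R.mon.one ⊗ₘ 𝟙 S'.R.X) ≫ (S.δ ⊗ₘ 𝟙 S'.R.X) ≫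
          (α_ S.R.X S.R.X S'.R.X).hom ≫ (𝟙 S.R.X ⊗ₘ (γ ⊗ₘ 𝟙 S'.R.X)) ≫
          (𝟙 S.R.X ⊗ₘ S'.R.mon.mul) ≫ (𝟙 S.R.X ⊗ₘ S'.ε) ≫ (ρ_ S.R.X).hom) = 𝟙 S.R.X) ∧
    (((λ_ S'.R.X).inv ≫ (S.R.mon.one ⊗ₘ 𝟙 S'.R.X) ≫ (S.δ ⊗ₘ 𝟙 S'.R.X) ≫
          (α_ S.R.X S.R.X S'.R.X).hom ≫ (𝟙 S.R.X ⊗ₘ (γ ⊗ₘ 𝟙 S'.R.X)) ≫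
          (𝟙 S.R.X ⊗ₘ S'.R.mon.mul) ≫ (𝟙 S.R.X ⊗ₘ S'.ε) ≫ (ρ_ S.R.X).hom) ≫ γ = 𝟙 S'.R.X) := by
  have right_inv := FrobMon.hom_dualHom_id hmul hcounit
  have left_inv := FrobMon.dualHom_hom_id hone hcomul
  have isIso : IsIso γ := ⟨⟨_, right_inv, left_inv⟩⟩
  simp only [FrobMon.dualHom, FrobMon.pairing, FrobMon.copairing, comp_whiskerRight,
    MonoidalCategory.whiskerLeft_comp, Category.assoc] at right_inv left_inv
  simp only [tensorHom_id, id_tensorHom, Category.assoc]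
  exact ⟨isIso, right_inv, left_inv⟩
end

section
/- Let B be a monoid in a braided monoidal category with comultiplication δ and counit ε making it a weak bimonoid, except that only the axioms (eq:w_bimonoid_1) (both variants), (eq:w_bimonoid_3) (both variants, i.e., axiom (w)), and (eq:w_bimonoid_5) (axiom (b)) are assumed. Then the weak counit axiom (v) holds: ε ∘ μ ∘ (μ ⊗ B) = (ε ⊗ ε) ∘ (μ ⊗ μ) ∘ (B ⊗ δ ⊗ B) = (ε ⊗ ε) ∘ (μ ⊗ μ) ∘ (B ⊗ (c⁻¹_{B,B} ∘ δ) ⊗ B) as morphisms B ⊗ B ⊗ B → K. -/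
/-!
Write `Π(x ⊗ y) = ε(x y₁) y₂` for a map `h : B → B ⊗ B`, `y ↦ y₁ ⊗ y₂`, with `h = δ` or
`h = c⁻¹ ∘ δ`. Identity (eq:w_bimonoid_1) says `Π(x ⊗ y) = Π(x ⊗ 1) y`, so `Π` is right
`B`-linear in `y`, and the counit law gives `ε ∘ Π = ε ∘ μ`. Hence
`ε(xyz) = ε(Π(x ⊗ yz)) = ε(Π(x ⊗ y) z) = ε(x y₁) ε(y₂ z)`.
-/

open CategoryTheory MonoidalCategory

section

variable {C : Type*} [Category C] [MonoidalCategory C] {B : C} {mul : B ⊗ B ⟶ B}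
  {counit : B ⟶ 𝟙_ C}

variable (mul counit) in
def counitContract (h : B ⟶ B ⊗ B) : B ⊗ B ⟶ B :=
  B ◁ h ≫ (α_ B B B).inv ≫ mul ▷ B ≫ counit ▷ B ≫ (λ_ B).hom

theorem counitContract_comp_counit {h : B ⟶ B ⊗ B} (hh : h ≫ B ◁ counit = (ρ_ B).inv) :
    counitContract mul counit h ≫ counit = mul ≫ counit := by
  simp only [counitContract, Category.assoc]
  rw [← leftUnitor_naturality, ← whisker_exchange_assoc, ← whisker_exchange_assoc,
    ← associator_inv_naturality_right_assoc, ← whiskerLeft_comp_assoc, hh]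
  simp [unitors_equal]

theorem counitContract_eq_whiskerRight_comp_mul {one : 𝟙_ C ⟶ B} {h : B ⟶ B ⊗ B}
    (heq : counitContract mul counit h =
      B ◁ (λ_ B).inv ≫ B ◁ one ▷ B ≫ B ◁ h ▷ B ≫ B ◁ (α_ B B B).hom ≫
        (α_ B B (B ⊗ B)).inv ≫ (mul ⊗ₘ mul) ≫ counit ▷ B ≫ (λ_ B).hom) :
    counitContract mul counit h =
      ((ρ_ B).inv ≫ B ◁ one ≫ counitContract mul counit h) ▷ B ≫ mul := by
  conv_lhs => rw [heq]
  simp [counitContract, MonoidalCategory.tensorHom_def, whisker_exchange_assoc]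

theorem counitContract_whiskerRight_comp_mul_comp_counit (h : B ⟶ B ⊗ B) :
    counitContract mul counit h ▷ B ≫ mul ≫ counit =
      (α_ B B B).hom ≫ B ◁ h ▷ B ≫ B ◁ (α_ B B B).hom ≫ (α_ B B (B ⊗ B)).inv ≫
        (mul ⊗ₘ mul) ≫ (counit ⊗ₘ counit) ≫ (λ_ (𝟙_ C)).hom := by
  simp [counitContract, MonoidalCategory.tensorHom_def, whisker_exchange_assoc]

theorem whiskerLeft_mul_comp_eq_of_eq_whiskerRight_comp_mul
    (mul_assoc : mul ▷ B ≫ mul = (α_ B B B).hom ≫ B ◁ mul ≫ mul)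
    {X : C} {f : X ⊗ B ⟶ B} {g : X ⟶ B} (hf : f = g ▷ B ≫ mul) :
    X ◁ mul ≫ f = (α_ X B B).inv ≫ f ▷ B ≫ mul := by
  subst hf
  rw [whisker_exchange_assoc]
  simp [mul_assoc]

theorem mul_whiskerRight_comp_mul_comp_counit_eq
    (mul_assoc : mul ▷ B ≫ mul = (α_ B B B).hom ≫ B ◁ mul ≫ mul) {f : B ⊗ B ⟶ B}
    (hf : f ≫ counit = mul ≫ counit) (hlin : B ◁ mul ≫ f = (α_ B B B).inv ≫ f ▷ B ≫ mul) :
    mul ▷ B ≫ mul ≫ counit = f ▷ B ≫ mul ≫ counit :=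
  calc mul ▷ B ≫ mul ≫ counit = (α_ B B B).hom ≫ B ◁ mul ≫ mul ≫ counit := by
        rw [reassoc_of% mul_assoc]
    _ = (α_ B B B).hom ≫ B ◁ mul ≫ f ≫ counit := by rw [hf]
    _ = f ▷ B ≫ mul ≫ counit := by rw [reassoc_of% hlin, Iso.hom_inv_id_assoc]

theorem mul_whiskerRight_comp_mul_comp_counit_of_counitContract_eq
    (mul_assoc : mul ▷ B ≫ mul = (α_ B B B).hom ≫ B ◁ mul ≫ mul) {one : 𝟙_ C ⟶ B}
    {h : B ⟶ B ⊗ B} (hh : h ≫ B ◁ counit = (ρ_ B).inv)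
    (heq : counitContract mul counit h =
      B ◁ (λ_ B).inv ≫ B ◁ one ▷ B ≫ B ◁ h ▷ B ≫ B ◁ (α_ B B B).hom ≫
        (α_ B B (B ⊗ B)).inv ≫ (mul ⊗ₘ mul) ≫ counit ▷ B ≫ (λ_ B).hom) :
    mul ▷ B ≫ mul ≫ counit =
      (α_ B B B).hom ≫ B ◁ h ▷ B ≫ B ◁ (α_ B B B).hom ≫ (α_ B B (B ⊗ B)).inv ≫
        (mul ⊗ₘ mul) ≫ (counit ⊗ₘ counit) ≫ (λ_ (𝟙_ C)).hom := by
  have hlin := whiskerLeft_mul_comp_eq_of_eq_whiskerRight_comp_mul mul_assoc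
    (counitContract_eq_whiskerRight_comp_mul heq)
  rw [mul_whiskerRight_comp_mul_comp_counit_eq mul_assoc (counitContract_comp_counit hh) hlin,
    counitContract_whiskerRight_comp_mul_comp_counit]

theorem comp_braiding_inv_comp_whiskerLeft [BraidedCategory C] {comul : B ⟶ B ⊗ B}
    (hc : comul ≫ counit ▷ B = (λ_ B).inv) :
    (comul ≫ (β_ B B).inv) ≫ B ◁ counit = (ρ_ B).inv := by
  rw [Category.assoc, ← BraidedCategory.braiding_inv_naturality_left, reassoc_of% hc,
    braiding_inv_tensorUnit_right, Iso.inv_hom_id_assoc]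

end

theorem weak_counit_of_weak_axioms_general {M : Type*} [Category M] [MonoidalCategory M]
    [BraidedCategory M] (B : M)
    (mul : B ⊗ B ⟶ B) (one : 𝟙_ M ⟶ B) (comul : B ⟶ B ⊗ B) (counit : B ⟶ 𝟙_ M)
    (mul_assoc : (mul ⊗ₘ 𝟙 B) ≫ mul = (α_ B B B).hom ≫ (𝟙 B ⊗ₘ mul) ≫ mul)
    (comul_counit_left : comul ≫ (counit ⊗ₘ 𝟙 B) = (λ_ B).inv)
    (comul_counit_right : comul ≫ (𝟙 B ⊗ₘ counit) = (ρ_ B).inv)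
    -- first identity of (eq:w_bimonoid_1)
    (eq1a : (𝟙 B ⊗ₘ comul) ≫ (𝟙 B ⊗ₘ (β_ B B).inv) ≫ (α_ B B B).inv ≫ (mul ⊗ₘ 𝟙 B) ≫
        (counit ⊗ₘ 𝟙 B) ≫ (λ_ B).hom =
      (𝟙 B ⊗ₘ (λ_ B).inv) ≫ (𝟙 B ⊗ₘ (one ⊗ₘ 𝟙 B)) ≫ (𝟙 B ⊗ₘ (comul ⊗ₘ 𝟙 B)) ≫
        (𝟙 B ⊗ₘ ((β_ B B).inv ⊗ₘ 𝟙 B)) ≫ (𝟙 B ⊗ₘ (α_ B B B).hom) ≫ (α_ B B (B ⊗ B)).inv ≫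
        (mul ⊗ₘ mul) ≫ (counit ⊗ₘ 𝟙 B) ≫ (λ_ B).hom)
    -- second identity of (eq:w_bimonoid_1)
    (eq1b : (𝟙 B ⊗ₘ comul) ≫ (α_ B B B).inv ≫ (mul ⊗ₘ 𝟙 B) ≫
        (counit ⊗ₘ 𝟙 B) ≫ (λ_ B).hom =
      (𝟙 B ⊗ₘ (λ_ B).inv) ≫ (𝟙 B ⊗ₘ (one ⊗ₘ 𝟙 B)) ≫ (𝟙 B ⊗ₘ (comul ⊗ₘ 𝟙 B)) ≫
        (𝟙 B ⊗ₘ (α_ B B B).hom) ≫ (α_ B B (B ⊗ B)).inv ≫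
        (mul ⊗ₘ mul) ≫ (counit ⊗ₘ 𝟙 B) ≫ (λ_ B).hom) :
    -- axiom (v), both variants
    ((mul ⊗ₘ 𝟙 B) ≫ mul ≫ counit =
      (α_ B B B).hom ≫ (𝟙 B ⊗ₘ (comul ⊗ₘ 𝟙 B)) ≫ (𝟙 B ⊗ₘ (α_ B B B).hom) ≫
        (α_ B B (B ⊗ B)).inv ≫ (mul ⊗ₘ mul) ≫ (counit ⊗ₘ counit) ≫ (λ_ (𝟙_ M)).hom) ∧
    ((mul ⊗ₘ 𝟙 B) ≫ mul ≫ counit =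
      (α_ B B B).hom ≫ (𝟙 B ⊗ₘ ((comul ≫ (β_ B B).inv) ⊗ₘ 𝟙 B)) ≫ (𝟙 B ⊗ₘ (α_ B B B).hom) ≫
        (α_ B B (B ⊗ B)).inv ≫ (mul ⊗ₘ mul) ≫ (counit ⊗ₘ counit) ≫ (λ_ (𝟙_ M)).hom) := by
  simp only [id_tensorHom, tensorHom_id] at *
  constructor
  · exact mul_whiskerRight_comp_mul_comp_counit_of_counitContract_eq mul_assoc
      comul_counit_right eq1b
  · simpa using mul_whiskerRight_comp_mul_comp_counit_of_counitContract_eq mul_assoc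
      (comp_braiding_inv_comp_whiskerLeft comul_counit_left)
      (by simpa [counitContract] using eq1a)

/-- For an object `B` of a braided monoidal category with a monoid and a comonoid
structure satisfying axiom (b), the weak unit axiom (w) (both variants), and the two
identities (eq:w_bimonoid_1), the weak counit axiom (v) holds (both variants). -/
theorem weak_counit_of_weak_axioms {M : Type*} [Category M] [MonoidalCategory M]
    [BraidedCategory M] (B : M)
    (mul : B ⊗ B ⟶ B) (one : 𝟙_ M ⟶ B) (comul : B ⟶ B ⊗ B) (counit : B ⟶ 𝟙_ M)
    (mul_assoc : (mul ⊗ₘ 𝟙 B) ≫ mul = (α_ B B B).hom ≫ (𝟙 B ⊗ₘ mul) ≫ mul)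
    (one_mul : (one ⊗ₘ 𝟙 B) ≫ mul = (λ_ B).hom)
    (mul_one : (𝟙 B ⊗ₘ one) ≫ mul = (ρ_ B).hom)
    (comul_coassoc : comul ≫ (comul ⊗ₘ 𝟙 B) ≫ (α_ B B B).hom = comul ≫ (𝟙 B ⊗ₘ comul))
    (comul_counit_left : comul ≫ (counit ⊗ₘ 𝟙 B) = (λ_ B).inv)
    (comul_counit_right : comul ≫ (𝟙 B ⊗ₘ counit) = (ρ_ B).inv)
    -- axiom (b) = (eq:w_bimonoid_5)
    (compat : mul ≫ comul =
      (comul ⊗ₘ comul) ≫ (α_ B B (B ⊗ B)).hom ≫ (𝟙 B ⊗ₘ (α_ B B B).inv) ≫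
        (𝟙 B ⊗ₘ ((β_ B B).hom ⊗ₘ 𝟙 B)) ≫ (𝟙 B ⊗ₘ (α_ B B B).hom) ≫ (α_ B B (B ⊗ B)).inv ≫
        (mul ⊗ₘ mul))
    -- axiom (w), plain variant = second identity of (eq:w_bimonoid_3)
    (weak_unit : one ≫ comul ≫ (comul ⊗ₘ 𝟙 B) =
      (λ_ (𝟙_ M)).inv ≫ (one ⊗ₘ one) ≫ (comul ⊗ₘ comul) ≫ (α_ B B (B ⊗ B)).hom ≫
        (𝟙 B ⊗ₘ (α_ B B B).inv) ≫ (𝟙 B ⊗ₘ (mul ⊗ₘ 𝟙 B)) ≫ (α_ B B B).inv)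
    -- axiom (w), inverse-braiding variant = first identity of (eq:w_bimonoid_3)
    (weak_unit' : one ≫ comul ≫ (comul ⊗ₘ 𝟙 B) =
      (λ_ (𝟙_ M)).inv ≫ (one ⊗ₘ one) ≫ (comul ⊗ₘ comul) ≫ (α_ B B (B ⊗ B)).hom ≫
        (𝟙 B ⊗ₘ (α_ B B B).inv) ≫ (𝟙 B ⊗ₘ ((β_ B B).inv ⊗ₘ 𝟙 B)) ≫ (𝟙 B ⊗ₘ (mul ⊗ₘ 𝟙 B)) ≫
        (α_ B B B).inv)
    -- first identity of (eq:w_bimonoid_1)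
    (eq1a : (𝟙 B ⊗ₘ comul) ≫ (𝟙 B ⊗ₘ (β_ B B).inv) ≫ (α_ B B B).inv ≫ (mul ⊗ₘ 𝟙 B) ≫
        (counit ⊗ₘ 𝟙 B) ≫ (λ_ B).hom =
      (𝟙 B ⊗ₘ (λ_ B).inv) ≫ (𝟙 B ⊗ₘ (one ⊗ₘ 𝟙 B)) ≫ (𝟙 B ⊗ₘ (comul ⊗ₘ 𝟙 B)) ≫
        (𝟙 B ⊗ₘ ((β_ B B).inv ⊗ₘ 𝟙 B)) ≫ (𝟙 B ⊗ₘ (α_ B B B).hom) ≫ (α_ B B (B ⊗ B)).inv ≫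
        (mul ⊗ₘ mul) ≫ (counit ⊗ₘ 𝟙 B) ≫ (λ_ B).hom)
    -- second identity of (eq:w_bimonoid_1)
    (eq1b : (𝟙 B ⊗ₘ comul) ≫ (α_ B B B).inv ≫ (mul ⊗ₘ 𝟙 B) ≫
        (counit ⊗ₘ 𝟙 B) ≫ (λ_ B).hom =
      (𝟙 B ⊗ₘ (λ_ B).inv) ≫ (𝟙 B ⊗ₘ (one ⊗ₘ 𝟙 B)) ≫ (𝟙 B ⊗ₘ (comul ⊗ₘ 𝟙 B)) ≫
        (𝟙 B ⊗ₘ (α_ B B B).hom) ≫ (α_ B B (B ⊗ B)).inv ≫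
        (mul ⊗ₘ mul) ≫ (counit ⊗ₘ 𝟙 B) ≫ (λ_ B).hom) :
    -- axiom (v), both variants
    ((mul ⊗ₘ 𝟙 B) ≫ mul ≫ counit =
      (α_ B B B).hom ≫ (𝟙 B ⊗ₘ (comul ⊗ₘ 𝟙 B)) ≫ (𝟙 B ⊗ₘ (α_ B B B).hom) ≫
        (α_ B B (B ⊗ B)).inv ≫ (mul ⊗ₘ mul) ≫ (counit ⊗ₘ counit) ≫ (λ_ (𝟙_ M)).hom) ∧
    ((mul ⊗ₘ 𝟙 B) ≫ mul ≫ counit =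
      (α_ B B B).hom ≫ (𝟙 B ⊗ₘ ((comul ≫ (β_ B B).inv) ⊗ₘ 𝟙 B)) ≫ (𝟙 B ⊗ₘ (α_ B B B).hom) ≫
        (α_ B B (B ⊗ B)).inv ≫ (mul ⊗ₘ mul) ≫ (counit ⊗ₘ counit) ≫ (λ_ (𝟙_ M)).hom) :=
  weak_counit_of_weak_axioms_general B mul one comul counit mul_assoc comul_counit_left
    comul_counit_right eq1a eq1b
end

section
/- Let C be a category, T : C → C a functor with both a monad structure 𝐓 = (T, m, u) and a comonad structure 𝐓̄ = (T, d, e). Let F̄ : C → C^𝐓̄ be the cofree coalgebra functor (right adjoint to the forgetful Ū) and F, U the free/forgetful functors for 𝐓. Then the monoid of natural transformations F̄ U → F̄ U (under composition) is isomorphic to the monoid of natural transformations φ : T → T under the convolution product φ ∗ φ' := m ∘ Tφ' ∘ φT ∘ d. -/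
/-!
Two adjunctions do the work. Transposing along `Ū ⊣ F̄` identifies endomorphisms of `F̄ U` with
maps `ψ : G U ⟶ U`, and composition becomes co-Kleisli composition `ψ' ∘ Gψ ∘ δU`. Transposing
along `F ⊣ U` identifies maps `ψ : H U ⟶ U` with maps `φ : H ⟶ T`, via `φ = ψF ∘ Hη` and
`ψ_A = a ∘ φ_A` for an algebra `(A, a)`; on free algebras `a = μ`, which turns co-Kleisli
composition into convolution and `ε U` into `η ∘ ε`.
-/

open CategoryTheory Functor

namespace CategoryTheory

lemma Adjunction.homEquiv_symm_comp {A B : Type*} [Category A] [Category B] {L : A ⥤ B} {R : B ⥤ A}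
    (adj : L ⊣ R) {Y Y' Y'' : B} (a : R.obj Y ⟶ R.obj Y') (b : R.obj Y' ⟶ R.obj Y'') :
    (adj.homEquiv _ _).symm (a ≫ b) =
      L.map (adj.unit.app (R.obj Y)) ≫ L.map (R.map ((adj.homEquiv _ _).symm a)) ≫
        (adj.homEquiv _ _).symm b := by
  conv_lhs => rw [← (adj.homEquiv _ _).apply_symm_apply a, adj.homEquiv_unit]
  rw [Category.assoc, adj.homEquiv_naturality_left_symm, adj.homEquiv_naturality_left_symm]

variable {C : Type*} [Category C]

namespace Comonad

variable (G : Comonad C) {D : Type*} [Category D] (U : D ⥤ C)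

def cofreeTransposeEquiv : (U ⋙ G.cofree ⟶ U ⋙ G.cofree) ≃ (U ⋙ (G : C ⥤ C) ⟶ U) :=
  ((G.adj.whiskerRight D).homEquiv (U ⋙ G.cofree) U).symm

lemma cofreeTransposeEquiv_comp (a b : U ⋙ G.cofree ⟶ U ⋙ G.cofree) :
    G.cofreeTransposeEquiv U (a ≫ b) =
      whiskerLeft U G.δ ≫ whiskerRight (G.cofreeTransposeEquiv U a) (G : C ⥤ C) ≫
        G.cofreeTransposeEquiv U b := by
  refine ((G.adj.whiskerRight D).homEquiv_symm_comp a b).trans ?_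
  congr 1
  ext X
  simp only [whiskeringRight_obj_map, whiskerRight_app, Adjunction.whiskerRight_unit_app_app,
    adj_unit]
  rfl

lemma cofreeTransposeEquiv_id :
    G.cofreeTransposeEquiv U (𝟙 _) = whiskerLeft U G.ε := by
  erw [cofreeTransposeEquiv, Adjunction.homEquiv_counit]
  ext X
  simp only [whiskeringRight_obj_obj, comp_obj, whiskeringRight_obj_map, whiskerRight_id',
    Category.id_comp, Adjunction.whiskerRight_counit_app_app, adj_counit, whiskerLeft_app]
  rfl

end Comonad

namespace Monad

variable (T : Monad C)

def forgetTransposeEquiv (H : C ⥤ C) : (T.forget ⋙ H ⟶ T.forget) ≃ (H ⟶ (T : C ⥤ C)) :=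
  (T.adj.whiskerLeft C).homEquiv H T.forget

@[simp]
lemma forgetTransposeEquiv_apply_app {H : C ⥤ C} (ψ : T.forget ⋙ H ⟶ T.forget) (X : C) :
    (T.forgetTransposeEquiv H ψ).app X = H.map (T.η.app X) ≫ ψ.app (T.free.obj X) := by
  erw [forgetTransposeEquiv, Adjunction.homEquiv_unit]
  simp only [NatTrans.comp_app, Adjunction.whiskerLeft_unit_app_app, adj_unit]
  rfl

@[simp]
lemma forgetTransposeEquiv_symm_apply_app {H : C ⥤ C} (φ : H ⟶ (T : C ⥤ C)) (A : T.Algebra) :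
    ((T.forgetTransposeEquiv H).symm φ).app A = φ.app A.A ≫ A.a := by
  erw [forgetTransposeEquiv, Adjunction.homEquiv_counit]
  simp only [NatTrans.comp_app, Adjunction.whiskerLeft_counit_app_app, adj_counit]
  rfl

def convolution (G : Comonad C) (φ φ' : (G : C ⥤ C) ⟶ T) : (G : C ⥤ C) ⟶ T :=
  G.δ ≫ whiskerRight φ (G : C ⥤ C) ≫ whiskerLeft (T : C ⥤ C) φ' ≫ T.μ

lemma forgetTransposeEquiv_whiskerLeft_δ_comp (G : Comonad C)
    (ψ ψ' : T.forget ⋙ (G : C ⥤ C) ⟶ T.forget) :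
    T.forgetTransposeEquiv G (whiskerLeft T.forget G.δ ≫ whiskerRight ψ (G : C ⥤ C) ≫ ψ') =
      T.convolution G (T.forgetTransposeEquiv G ψ) (T.forgetTransposeEquiv G ψ') := by
  obtain ⟨φ, rfl⟩ := (T.forgetTransposeEquiv G).symm.surjective ψ
  obtain ⟨φ', rfl⟩ := (T.forgetTransposeEquiv G).symm.surjective ψ'
  rw [Equiv.apply_symm_apply, Equiv.apply_symm_apply]
  ext X
  have hφ : G.map (T.η.app X) ≫ φ.app (T.obj X) ≫ T.μ.app X = φ.app X := by
    rw [φ.naturality_assoc, T.right_unit]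
    exact Category.comp_id _
  have hδ : G.map (T.η.app X) ≫ G.δ.app (T.obj X) = G.δ.app X ≫ G.map (G.map (T.η.app X)) :=
    G.δ.naturality (T.η.app X)
  simp only [NatTrans.comp_app, forgetTransposeEquiv_apply_app, whiskerRight_app,
    forgetTransposeEquiv_symm_apply_app]
  -- the free algebra on `X` has carrier `T X` and structure map `μ`
  change G.map (T.η.app X) ≫ G.δ.app (T.obj X) ≫ G.map (φ.app (T.obj X) ≫ T.μ.app X) ≫
    φ'.app (T.obj X) ≫ T.μ.app X = G.δ.app X ≫ G.map (φ.app X) ≫ φ'.app (T.obj X) ≫ T.μ.app X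
  rw [reassoc_of% hδ, ← G.map_comp_assoc, hφ]

lemma forgetTransposeEquiv_whiskerLeft_ε (G : Comonad C) :
    T.forgetTransposeEquiv G (whiskerLeft T.forget G.ε) = G.ε ≫ T.η := by
  ext X
  rw [forgetTransposeEquiv_apply_app]
  exact G.ε.naturality (T.η.app X)

def cofreeForgetEndEquiv (G : Comonad C) :
    (T.forget ⋙ G.cofree ⟶ T.forget ⋙ G.cofree) ≃ ((G : C ⥤ C) ⟶ T) :=
  (G.cofreeTransposeEquiv T.forget).trans (T.forgetTransposeEquiv G)

lemma cofreeForgetEndEquiv_comp (G : Comonad C)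
    (a b : T.forget ⋙ G.cofree ⟶ T.forget ⋙ G.cofree) :
    T.cofreeForgetEndEquiv G (a ≫ b) =
      T.convolution G (T.cofreeForgetEndEquiv G a) (T.cofreeForgetEndEquiv G b) := by
  rw [cofreeForgetEndEquiv, Equiv.trans_apply, Comonad.cofreeTransposeEquiv_comp,
    forgetTransposeEquiv_whiskerLeft_δ_comp]
  rfl

lemma cofreeForgetEndEquiv_id (G : Comonad C) :
    T.cofreeForgetEndEquiv G (𝟙 _) = G.ε ≫ T.η := by
  rw [cofreeForgetEndEquiv, Equiv.trans_apply, Comonad.cofreeTransposeEquiv_id,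
    forgetTransposeEquiv_whiskerLeft_ε]

end Monad

end CategoryTheory

/-- Let `T` be a monad and `G` a comonad on `C` with the same underlying endofunctor.
The monoid (under composition) of natural endotransformations of the composite
`F̄U : C^T ⥤ C^Ḡ` of the forgetful functor of the monad with the cofree functor of the
comonad is isomorphic to the monoid of natural transformations `T ⟶ T` under the
convolution product `φ ∗ φ' = m ∘ Tφ' ∘ φT ∘ d`, with unit `u ∘ e`. -/
theorem cofree_forget_end_monoid_iso_convolution {C : Type*} [Category C]
    (T : Monad C) (G : Comonad C) (h : (G : C ⥤ C) = (T : C ⥤ C)) :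
    ∃ Φ : ((T.forget ⋙ G.cofree) ⟶ (T.forget ⋙ G.cofree)) ≃
        ((T : C ⥤ C) ⟶ (T : C ⥤ C)),
      (∀ a b : (T.forget ⋙ G.cofree) ⟶ (T.forget ⋙ G.cofree),
        Φ (a ≫ b) =
          (eqToHom h.symm ≫ G.δ ≫
              eqToHom (show (G : C ⥤ C) ⋙ (G : C ⥤ C) = (T : C ⥤ C) ⋙ (T : C ⥤ C) by
                rw [h])) ≫
            Functor.whiskerRight (Φ a) (T : C ⥤ C) ≫ Functor.whiskerLeft (T : C ⥤ C) (Φ b) ≫ T.μ) ∧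
      Φ (𝟙 (T.forget ⋙ G.cofree)) = (eqToHom h.symm ≫ G.ε) ≫ T.η := by
  obtain ⟨F, ε, δ, _, _, _⟩ := G
  change F = T.toFunctor at h
  subst h
  simp only [eqToHom_refl, Category.id_comp, Category.comp_id]
  exact ⟨T.cofreeForgetEndEquiv _, T.cofreeForgetEndEquiv_comp _, T.cofreeForgetEndEquiv_id _⟩
end

section
/- Let (B, μ, η, δ, ε) be a weak bimonoid in a braided monoidal category (M, ⊗, K, c) and define the target maps t := (B ⊗ ε) ∘ (B ⊗ μ) ∘ (c_{B,B} ⊗ B) ∘ (B ⊗ δ) ∘ (B ⊗ η) and r := (ε ⊗ B) ∘ (μ ⊗ B) ∘ (B ⊗ c_{B,B}) ∘ (δ ⊗ B) ∘ (η ⊗ B) : B → B. Then r ∗ id_B = id_B, where ∗ is the convolution product f ∗ g := μ ∘ (f ⊗ g) ∘ δ. -/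
open CategoryTheory MonoidalCategory

set_option maxHeartbeats 1000000

variable {M : Type*} [Category M] [MonoidalCategory M] [BraidedCategory M]

/-- A weak bimonoid in a braided monoidal category, in the sense of Pastro–Street:
a monoid and comonoid structure on the same object satisfying the multiplicativity
axiom (b) and the weak unit and counit axioms (w) and (v). -/
structure WeakBimon (M : Type*) [Category M] [MonoidalCategory M] [BraidedCategory M] where
  B : M
  mul : B ⊗ B ⟶ B
  one : 𝟙_ M ⟶ B
  comul : B ⟶ B ⊗ B
  counit : B ⟶ 𝟙_ M
  mul_assoc : (mul ⊗ₘ 𝟙 B) ≫ mul = (α_ B B B).hom ≫ (𝟙 B ⊗ₘ mul) ≫ mul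
  one_mul : (one ⊗ₘ 𝟙 B) ≫ mul = (λ_ B).hom
  mul_one : (𝟙 B ⊗ₘ one) ≫ mul = (ρ_ B).hom
  comul_coassoc : comul ≫ (comul ⊗ₘ 𝟙 B) ≫ (α_ B B B).hom = comul ≫ (𝟙 B ⊗ₘ comul)
  comul_counit_left : comul ≫ (counit ⊗ₘ 𝟙 B) = (λ_ B).inv
  comul_counit_right : comul ≫ (𝟙 B ⊗ₘ counit) = (ρ_ B).inv
  compat : mul ≫ comul =
    (comul ⊗ₘ comul) ≫ (α_ B B (B ⊗ B)).hom ≫ (𝟙 B ⊗ₘ (α_ B B B).inv) ≫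
      (𝟙 B ⊗ₘ ((β_ B B).hom ⊗ₘ 𝟙 B)) ≫ (𝟙 B ⊗ₘ (α_ B B B).hom) ≫ (α_ B B (B ⊗ B)).inv ≫
      (mul ⊗ₘ mul)
  weak_unit : one ≫ comul ≫ (comul ⊗ₘ 𝟙 B) =
    (λ_ (𝟙_ M)).inv ≫ (one ⊗ₘ one) ≫ (comul ⊗ₘ comul) ≫ (α_ B B (B ⊗ B)).hom ≫
      (𝟙 B ⊗ₘ (α_ B B B).inv) ≫ (𝟙 B ⊗ₘ (mul ⊗ₘ 𝟙 B)) ≫ (α_ B B B).inv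
  weak_unit' : one ≫ comul ≫ (comul ⊗ₘ 𝟙 B) =
    (λ_ (𝟙_ M)).inv ≫ (one ⊗ₘ one) ≫ (comul ⊗ₘ comul) ≫ (α_ B B (B ⊗ B)).hom ≫
      (𝟙 B ⊗ₘ (α_ B B B).inv) ≫ (𝟙 B ⊗ₘ ((β_ B B).inv ⊗ₘ 𝟙 B)) ≫ (𝟙 B ⊗ₘ (mul ⊗ₘ 𝟙 B)) ≫
      (α_ B B B).inv
  weak_counit : (mul ⊗ₘ 𝟙 B) ≫ mul ≫ counit =
    (α_ B B B).hom ≫ (𝟙 B ⊗ₘ (comul ⊗ₘ 𝟙 B)) ≫ (𝟙 B ⊗ₘ (α_ B B B).hom) ≫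
      (α_ B B (B ⊗ B)).inv ≫ (mul ⊗ₘ mul) ≫ (counit ⊗ₘ counit) ≫ (λ_ (𝟙_ M)).hom
  weak_counit' : (mul ⊗ₘ 𝟙 B) ≫ mul ≫ counit =
    (α_ B B B).hom ≫ (𝟙 B ⊗ₘ ((comul ≫ (β_ B B).inv) ⊗ₘ 𝟙 B)) ≫ (𝟙 B ⊗ₘ (α_ B B B).hom) ≫
      (α_ B B (B ⊗ B)).inv ≫ (mul ⊗ₘ mul) ≫ (counit ⊗ₘ counit) ≫ (λ_ (𝟙_ M)).hom

/-- The opmonoidal structure `τ_{X,Y} = (X ⊗ c_{Y,B} ⊗ B) ∘ (X ⊗ Y ⊗ δ)` of the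
weak bimonad `– ⊗ B` induced by a weak bimonoid `B`. -/
def tauW (W : WeakBimon M) (X Y : M) : (X ⊗ Y) ⊗ W.B ⟶ (X ⊗ W.B) ⊗ (Y ⊗ W.B) :=
  (𝟙 (X ⊗ Y) ⊗ₘ W.comul) ≫ (α_ X Y (W.B ⊗ W.B)).hom ≫ (𝟙 X ⊗ₘ (α_ Y W.B W.B).inv) ≫
    (𝟙 X ⊗ₘ ((β_ Y W.B).hom ⊗ₘ 𝟙 W.B)) ≫ (𝟙 X ⊗ₘ (α_ W.B Y W.B).hom) ≫
    (α_ X W.B (Y ⊗ W.B)).inv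

/-- The multiplication `m_X = X ⊗ μ` of the monad `– ⊗ B`. -/
def mW (W : WeakBimon M) (X : M) : (X ⊗ W.B) ⊗ W.B ⟶ X ⊗ W.B :=
  (α_ X W.B W.B).hom ≫ (𝟙 X ⊗ₘ W.mul)

/-- The unit `u_X = X ⊗ η` of the monad `– ⊗ B`. -/
def uW (W : WeakBimon M) (X : M) : X ⟶ X ⊗ W.B :=
  (ρ_ X).inv ≫ (𝟙 X ⊗ₘ W.one)

/-- Convolution product of endomorphisms of a weak bimonoid. -/
def convW (W : WeakBimon M) (f g : W.B ⟶ W.B) : W.B ⟶ W.B :=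
  W.comul ≫ (f ⊗ₘ g) ≫ W.mul

/-- The source map `r = (ε ⊗ B) ∘ (μ ⊗ B) ∘ (B ⊗ c) ∘ (δ ⊗ B) ∘ (η ⊗ B)`. -/
def rW (W : WeakBimon M) : W.B ⟶ W.B :=
  (λ_ W.B).inv ≫ (W.one ⊗ₘ 𝟙 W.B) ≫ (W.comul ⊗ₘ 𝟙 W.B) ≫ (α_ W.B W.B W.B).hom ≫
    (𝟙 W.B ⊗ₘ (β_ W.B W.B).hom) ≫ (α_ W.B W.B W.B).inv ≫ (W.mul ⊗ₘ 𝟙 W.B) ≫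
    (W.counit ⊗ₘ 𝟙 W.B) ≫ (λ_ W.B).hom

/-- The target map `t = (B ⊗ ε) ∘ (B ⊗ μ) ∘ (c ⊗ B) ∘ (B ⊗ δ) ∘ (B ⊗ η)`. -/
def tW (W : WeakBimon M) : W.B ⟶ W.B :=
  (ρ_ W.B).inv ≫ (𝟙 W.B ⊗ₘ W.one) ≫ (𝟙 W.B ⊗ₘ W.comul) ≫ (α_ W.B W.B W.B).inv ≫
    ((β_ W.B W.B).hom ⊗ₘ 𝟙 W.B) ≫ (α_ W.B W.B W.B).hom ≫ (𝟙 W.B ⊗ₘ W.mul) ≫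
    (𝟙 W.B ⊗ₘ W.counit) ≫ (ρ_ W.B).hom

/-- The map `s`, i.e. `(B ⊗ ε) ∘ (B ⊗ μ) ∘ (δ ⊗ B) ∘ (η ⊗ B)` (the `t`-map of `B^op`). -/
def sW (W : WeakBimon M) : W.B ⟶ W.B :=
  (λ_ W.B).inv ≫ (W.one ⊗ₘ 𝟙 W.B) ≫ (W.comul ⊗ₘ 𝟙 W.B) ≫ (α_ W.B W.B W.B).hom ≫
    (𝟙 W.B ⊗ₘ W.mul) ≫ (𝟙 W.B ⊗ₘ W.counit) ≫ (ρ_ W.B).hom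

/-- The map `r^op`, i.e. `(ε ⊗ B) ∘ (μ ⊗ B) ∘ (B ⊗ δ) ∘ (B ⊗ η)` (the `r`-map of `B^op`). -/
def ropW (W : WeakBimon M) : W.B ⟶ W.B :=
  (ρ_ W.B).inv ≫ (𝟙 W.B ⊗ₘ W.one) ≫ (𝟙 W.B ⊗ₘ W.comul) ≫ (α_ W.B W.B W.B).inv ≫
    (W.mul ⊗ₘ 𝟙 W.B) ≫ (W.counit ⊗ₘ 𝟙 W.B) ≫ (λ_ W.B).hom

/-! In Sweedler notation (braiding suppressed), `r y = ε(1₁ y) 1₂`. Multiplicativity of `δ` gives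
`(ε ⊗ B) δ (x y) = ε(x₁ y₁) x₂ y₂`; at `x = 1` the right side is `(r ∗ id) y`, while the left side
is `(ε ⊗ B) δ y = y`. -/

namespace WeakBimon

variable (W : WeakBimon M)

/-- `x ⊗ y ↦ ε(x₁ y) x₂`, so that `r = rAct (1 ⊗ -)`. -/
def rAct : W.B ⊗ W.B ⟶ W.B :=
  (W.comul ⊗ₘ 𝟙 W.B) ≫ (α_ W.B W.B W.B).hom ≫ (𝟙 W.B ⊗ₘ (β_ W.B W.B).hom) ≫
    (α_ W.B W.B W.B).inv ≫ (W.mul ⊗ₘ 𝟙 W.B) ≫ (W.counit ⊗ₘ 𝟙 W.B) ≫ (λ_ W.B).hom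

theorem rW_eq : rW W = (λ_ W.B).inv ≫ (W.one ⊗ₘ 𝟙 W.B) ≫ W.rAct := rfl

theorem mul_comul_counit_left :
    W.mul ≫ W.comul ≫ (W.counit ⊗ₘ 𝟙 W.B) ≫ (λ_ W.B).hom =
      (𝟙 W.B ⊗ₘ W.comul) ≫ (α_ W.B W.B W.B).inv ≫ (W.rAct ⊗ₘ 𝟙 W.B) ≫ W.mul := by
  rw [reassoc_of% W.compat, tensorHom_comp_tensorHom_assoc W.mul W.mul, Category.comp_id,
    tensorHom_def' W.comul, tensorHom_def (W.mul ≫ W.counit)]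
  simp only [rAct]
  monoidal

theorem convW_rW_id :
    convW W (rW W) (𝟙 W.B) =
      (λ_ W.B).inv ≫ (W.one ⊗ₘ 𝟙 W.B) ≫ W.mul ≫ W.comul ≫ (W.counit ⊗ₘ 𝟙 W.B) ≫
        (λ_ W.B).hom := by
  rw [mul_comul_counit_left, reassoc_of% tensor_id_comp_id_tensor,
    ← id_tensor_comp_tensor_id_assoc, convW, rW_eq]
  monoidal

end WeakBimon

/-- For a weak bimonoid `B`, the map `r` satisfies `r ∗ id_B = id_B`. -/
theorem weakBimon_r_conv_id (W : WeakBimon M) :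
    convW W (rW W) (𝟙 W.B) = 𝟙 W.B := by
  rw [W.convW_rW_id, reassoc_of% W.one_mul, reassoc_of% W.comul_counit_left]
  simp
end
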